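/- Truth Lemma for CoRGAL: for every formula φ ∈ L_CoRGAL and every maximal consistent theory x, φ ∈ x if and only if (M^C, x) ⊨ φ, where M^C is the canonical model. -/
import Mathlib


/- Formalization of Coalition and Relativised Group Announcement Logic (CoRGAL). -/

namespace CoRGAL

/-- Purely epistemic formulas (the fragment L_EL). -/
inductive EForm (Agt : Type) : Type
  | atom : ℕ → EForm Agt
  | neg  : EForm Agt → EForm Agt
  | and  : EForm Agt → EForm Agt → EForm Agt
  | know : Agt → EForm Agt → EForm Agt

/-- Formulas of L_CoRGAL: atoms, ¬, ∧, K_a, [φ]ψ, [G,χ]φ, [⟨G⟩]φ. -/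
inductive Form (Agt : Type) : Type
  | atom  : ℕ → Form Agt
  | neg   : Form Agt → Form Agt
  | and   : Form Agt → Form Agt → Form Agt
  | know  : Agt → Form Agt → Form Agt
  | ann   : Form Agt → Form Agt → Form Agt          -- [φ]ψ
  | group : Finset Agt → Form Agt → Form Agt → Form Agt  -- [G,χ]φ
  | coal  : Finset Agt → Form Agt → Form Agt        -- [⟨G⟩]φ

variable {Agt : Type}

def Form.imp (φ ψ : Form Agt) : Form Agt := .neg (.and φ (.neg ψ))
def Form.iff' (φ ψ : Form Agt) : Form Agt := .and (φ.imp ψ) (ψ.imp φ)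
def Form.bot : Form Agt := .and (.atom 0) (.neg (.atom 0))
def Form.top : Form Agt := .neg Form.bot

def EForm.toForm : EForm Agt → Form Agt
  | .atom p => .atom p
  | .neg φ => .neg φ.toForm
  | .and φ ψ => .and φ.toForm ψ.toForm
  | .know a φ => .know a φ.toForm

/-- The G-announcement ⋀_{i ∈ G} K_i (f i), with all f i epistemic. -/
noncomputable def GAnn (G : Finset Agt) (f : Agt → EForm Agt) : Form Agt :=
  (G.toList.map fun i => Form.know i (f i).toForm).foldr Form.and Form.top

/-- Epistemic models: states, an equivalence relation for each agent, a valuation. -/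
structure Model (Agt : Type) where
  W : Type
  rel : Agt → W → W → Prop
  rel_equiv : ∀ a, Equivalence (rel a)
  val : ℕ → W → Prop

/-- Updated model: restriction to the states satisfying S. -/
def Model.restrict (M : Model Agt) (S : M.W → Prop) : Model Agt where
  W := {v : M.W // S v}
  rel a u v := M.rel a u.1 v.1
  rel_equiv a := ⟨fun u => (M.rel_equiv a).refl u.1,
    fun h => (M.rel_equiv a).symm h, fun h h' => (M.rel_equiv a).trans h h'⟩
  val p v := M.val p v.1

/-- Satisfaction for purely epistemic formulas (standard S5 semantics). -/
def esat (M : Model Agt) : M.W → EForm Agt → Prop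
  | w, .atom p => M.val p w
  | w, .neg φ => ¬ esat M w φ
  | w, .and φ ψ => esat M w φ ∧ esat M w ψ
  | w, .know a φ => ∀ v, M.rel a w v → esat M v φ

/-- Truth of the G-announcement ⋀_{i∈G} K_i (f i) at (M,w). -/
def gsat (M : Model Agt) (w : M.W) (G : Finset Agt) (f : Agt → EForm Agt) : Prop :=
  ∀ i ∈ G, ∀ v, M.rel i w v → esat M v (f i)

variable [DecidableEq Agt] [Fintype Agt]

/-- Satisfaction for L_CoRGAL.
[φ]ψ: if φ is true then ψ holds in the model restricted to φ-states.
[G,χ]φ: χ is true and for every G-announcement ψ_G, [ψ_G ∧ χ]φ.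
[⟨G⟩]φ: for every G-announcement ψ_G there is an (A∖G)-announcement χ such
that if ψ_G is true then ⟨ψ_G ∧ χ⟩φ. -/
def sat : (M : Model Agt) → M.W → Form Agt → Prop
  | M, w, .atom p => M.val p w
  | M, w, .neg φ => ¬ sat M w φ
  | M, w, .and φ ψ => sat M w φ ∧ sat M w ψ
  | M, w, .know a φ => ∀ v, M.rel a w v → sat M v φ
  | M, w, .ann φ ψ =>
      ∀ h : sat M w φ, sat (M.restrict fun v => sat M v φ) ⟨w, h⟩ ψ
  | M, w, .group G χ φ =>
      sat M w χ ∧ ∀ f : Agt → EForm Agt,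
        ∀ h : gsat M w G f ∧ sat M w χ,
          sat (M.restrict fun v => gsat M v G f ∧ sat M v χ) ⟨w, h⟩ φ
  | M, w, .coal G φ =>
      ∀ f : Agt → EForm Agt, ∃ g : Agt → EForm Agt,
        gsat M w G f →
          ∃ h : gsat M w G f ∧ gsat M w Gᶜ g,
            sat (M.restrict fun v => gsat M v G f ∧ gsat M v Gᶜ g) ⟨w, h⟩ φ

/-- Validity: truth at every pointed epistemic model. -/
def valid (φ : Form Agt) : Prop := ∀ (M : Model Agt) (w : M.W), sat M w φ

/-- The dual coalition operator ⟨[G]⟩φ := ¬[⟨G⟩]¬φ. -/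
def coalDia (G : Finset Agt) (φ : Form Agt) : Form Agt := .neg (.coal G (.neg φ))

/-- Necessity forms η ::= ♯ | φ → η | K_a η | [φ]η. -/
inductive NForm (Agt : Type) : Type
  | hole : NForm Agt
  | imp  : Form Agt → NForm Agt → NForm Agt
  | know : Agt → NForm Agt → NForm Agt
  | ann  : Form Agt → NForm Agt → NForm Agt

/-- η(φ): replace the placeholder ♯ by φ. -/
def NForm.subst : NForm Agt → Form Agt → Form Agt
  | .hole, φ => φ
  | .imp ψ η, φ => ψ.imp (η.subst φ)
  | .know a η, φ => .know a (η.subst φ)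
  | .ann ψ η, φ => .ann ψ (η.subst φ)

/-- Instances of propositional tautologies (treating non-Boolean subformulas as atoms). -/
def Tautology (φ : Form Agt) : Prop :=
  ∀ v : Form Agt → Prop,
    (∀ ψ, v (Form.neg ψ) ↔ ¬ v ψ) →
    (∀ ψ χ, v (Form.and ψ χ) ↔ (v ψ ∧ v χ)) →
    v φ

/-- The axiom system CoRGAL: theorems. -/
inductive Thm {Agt : Type} [DecidableEq Agt] [Fintype Agt] : Form Agt → Prop
  | taut {φ : Form Agt} : Tautology φ → Thm φ
  | a1 (a : Agt) (φ ψ : Form Agt) :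
      Thm ((Form.know a (φ.imp ψ)).imp ((Form.know a φ).imp (Form.know a ψ)))
  | a2 (a : Agt) (φ : Form Agt) : Thm ((Form.know a φ).imp φ)
  | a3 (a : Agt) (φ : Form Agt) : Thm ((Form.know a φ).imp (Form.know a (Form.know a φ)))
  | a4 (a : Agt) (φ : Form Agt) :
      Thm ((Form.neg (Form.know a φ)).imp (Form.know a (Form.neg (Form.know a φ))))
  | a5 (φ : Form Agt) (p : ℕ) : Thm ((Form.ann φ (.atom p)).iff' (φ.imp (.atom p)))
  | a6 (φ ψ : Form Agt) : Thm ((Form.ann φ (.neg ψ)).iff' (φ.imp (.neg (Form.ann φ ψ))))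
  | a7 (φ ψ χ : Form Agt) :
      Thm ((Form.ann φ (.and ψ χ)).iff' ((Form.ann φ ψ).and (Form.ann φ χ)))
  | a8 (φ : Form Agt) (a : Agt) (ψ : Form Agt) :
      Thm ((Form.ann φ (.know a ψ)).iff' (φ.imp (.know a (Form.ann φ ψ))))
  | a9 (φ ψ χ : Form Agt) :
      Thm ((Form.ann φ (.ann ψ χ)).iff' (Form.ann (φ.and (Form.ann φ ψ)) χ))
  | a10 (G : Finset Agt) (χ φ : Form Agt) (f : Agt → EForm Agt) :
      Thm ((Form.group G χ φ).imp (χ.and (Form.ann ((GAnn G f).and χ) φ)))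
  | a11 (G : Finset Agt) (φ : Form Agt) (f : Agt → EForm Agt) :
      Thm ((Form.coal G φ).imp (.neg (Form.group Gᶜ (GAnn G f) (.neg φ))))
  | mp {φ ψ : Form Agt} : Thm (φ.imp ψ) → Thm φ → Thm ψ
  | necK (a : Agt) {φ : Form Agt} : Thm φ → Thm (Form.know a φ)
  | necAnn (ψ : Form Agt) {φ : Form Agt} : Thm φ → Thm (Form.ann ψ φ)
  | necGroup (G : Finset Agt) (χ : Form Agt) {φ : Form Agt} : Thm φ → Thm (Form.group G χ φ)
  | necCoal (G : Finset Agt) {φ : Form Agt} : Thm φ → Thm (Form.coal G φ)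
  | r5 {η : NForm Agt} {G : Finset Agt} {χ φ : Form Agt} :
      (∀ f : Agt → EForm Agt, Thm (η.subst (χ.and (Form.ann ((GAnn G f).and χ) φ)))) →
      Thm (η.subst (Form.group G χ φ))
  | r6 {η : NForm Agt} {G : Finset Agt} {φ : Form Agt} :
      (∀ f : Agt → EForm Agt, Thm (η.subst (.neg (Form.group Gᶜ (GAnn G f) (.neg φ))))) →
      Thm (η.subst (Form.coal G φ))

/-- A theory: contains all theorems, closed under modus ponens (R0), R5 and R6. -/
structure IsTheory (x : Set (Form Agt)) : Prop where
  mem_of_thm : ∀ {φ : Form Agt}, Thm φ → φ ∈ x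
  mp : ∀ {φ ψ : Form Agt}, φ.imp ψ ∈ x → φ ∈ x → ψ ∈ x
  r5 : ∀ (η : NForm Agt) (G : Finset Agt) (χ φ : Form Agt),
        (∀ f : Agt → EForm Agt, η.subst (χ.and (Form.ann ((GAnn G f).and χ) φ)) ∈ x) →
        η.subst (Form.group G χ φ) ∈ x
  r6 : ∀ (η : NForm Agt) (G : Finset Agt) (φ : Form Agt),
        (∀ f : Agt → EForm Agt, η.subst (.neg (Form.group Gᶜ (GAnn G f) (.neg φ))) ∈ x) →
        η.subst (Form.coal G φ) ∈ x

def Consistent (x : Set (Form Agt)) : Prop := Form.bot ∉ x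
def Maximal (x : Set (Form Agt)) : Prop := ∀ φ : Form Agt, φ ∈ x ∨ Form.neg φ ∈ x
def MCT (x : Set (Form Agt)) : Prop := IsTheory x ∧ Consistent x ∧ Maximal x

/-- The canonical model: worlds are maximal consistent theories. -/
def canonicalModel (Agt : Type) [DecidableEq Agt] [Fintype Agt] : Model Agt where
  W := {x : Set (Form Agt) // MCT x}
  rel a x y := {φ : Form Agt | Form.know a φ ∈ x.1} = {φ : Form Agt | Form.know a φ ∈ y.1}
  rel_equiv _ := ⟨fun _ => rfl, Eq.symm, Eq.trans⟩
  val p x := Form.atom p ∈ x.1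

/-- Size of a formula. -/
def fsize : Form Agt → ℕ
  | .atom _ => 1
  | .neg φ => fsize φ + 1
  | .know _ φ => fsize φ + 1
  | .group _ _ φ => fsize φ + 1
  | .coal _ φ => fsize φ + 1
  | .and φ ψ => fsize φ + fsize ψ + 1
  | .ann ψ φ => fsize ψ + 3 * fsize φ

/-- The [,]-depth. -/
def dG : Form Agt → ℕ
  | .atom _ => 0
  | .neg φ => dG φ
  | .know _ φ => dG φ
  | .coal _ φ => dG φ
  | .and φ ψ => max (dG φ) (dG ψ)
  | .ann ψ φ => dG ψ + dG φ
  | .group _ χ φ => dG χ + dG φ + 1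

/-- The [⟨⟩]-depth. -/
def dC : Form Agt → ℕ
  | .atom _ => 0
  | .neg φ => dC φ
  | .know _ φ => dC φ
  | .and φ ψ => max (dC φ) (dC ψ)
  | .ann ψ φ => dC ψ + dC φ
  | .group _ χ φ => dC χ + dC φ
  | .coal _ φ => dC φ + 1

/-- The well-founded order <^{Size}_{[,],[⟨⟩]}. -/
def measLt (φ ψ : Form Agt) : Prop :=
  dC φ < dC ψ ∨ (dC φ = dC ψ ∧ (dG φ < dG ψ ∨ (dG φ = dG ψ ∧ fsize φ < fsize ψ)))


/-! ### Toolkit: propositional reasoning in theories -/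

section Block
variable {Agt : Type} [DecidableEq Agt] [Fintype Agt]

lemma thm_taut (φ : Form Agt) (h : Tautology φ) : Thm φ := Thm.taut h

variable {x : Set (Form Agt)}

lemma IsTheory.bot_mem (ht : IsTheory x) {φ : Form Agt}
    (h1 : φ ∈ x) (h2 : Form.neg φ ∈ x) : Form.bot ∈ x := by
  have t : Thm (φ.imp ((Form.neg φ).imp Form.bot)) := by
    apply thm_taut; intro v hn ha
    simp only [Form.imp, Form.bot, hn, ha]; tauto
  exact ht.mp (ht.mp (ht.mem_of_thm t) h1) h2

lemma MCT.not_mem (hx : MCT x) {φ : Form Agt} (h : Form.neg φ ∈ x) : φ ∉ x :=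
  fun h' => hx.2.1 (hx.1.bot_mem h' h)

lemma MCT.neg_mem_iff (hx : MCT x) {φ : Form Agt} : Form.neg φ ∈ x ↔ φ ∉ x := by
  constructor
  · exact fun h h' => hx.2.1 (hx.1.bot_mem h' h)
  · intro h; rcases hx.2.2 φ with h' | h'
    · exact absurd h' h
    · exact h'

lemma MCT.and_mem_iff (hx : MCT x) {φ ψ : Form Agt} :
    Form.and φ ψ ∈ x ↔ (φ ∈ x ∧ ψ ∈ x) := by
  constructor
  · intro h
    have t1 : Thm ((Form.and φ ψ).imp φ) := by
      apply thm_taut; intro v hn ha; simp only [Form.imp, hn, ha]; tauto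
    have t2 : Thm ((Form.and φ ψ).imp ψ) := by
      apply thm_taut; intro v hn ha; simp only [Form.imp, hn, ha]; tauto
    exact ⟨hx.1.mp (hx.1.mem_of_thm t1) h, hx.1.mp (hx.1.mem_of_thm t2) h⟩
  · rintro ⟨h1, h2⟩
    have t : Thm (φ.imp (ψ.imp (Form.and φ ψ))) := by
      apply thm_taut; intro v hn ha; simp only [Form.imp, hn, ha]; tauto
    exact hx.1.mp (hx.1.mp (hx.1.mem_of_thm t) h1) h2

lemma MCT.imp_mem_iff (hx : MCT x) {φ ψ : Form Agt} :
    φ.imp ψ ∈ x ↔ (φ ∈ x → ψ ∈ x) := by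
  constructor
  · exact fun h h1 => hx.1.mp h h1
  · intro h
    rcases hx.2.2 φ with h' | h'
    · have t : Thm (ψ.imp (φ.imp ψ)) := by
        apply thm_taut; intro v hn ha; simp only [Form.imp, hn, ha]; tauto
      exact hx.1.mp (hx.1.mem_of_thm t) (h h')
    · have t : Thm ((Form.neg φ).imp (φ.imp ψ)) := by
        apply thm_taut; intro v hn ha; simp only [Form.imp, hn, ha]; tauto
      exact hx.1.mp (hx.1.mem_of_thm t) h'

lemma MCT.iff_mem (hx : MCT x) {φ ψ : Form Agt} (ht : Thm (φ.iff' ψ)) :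
    (φ ∈ x ↔ ψ ∈ x) := by
  have h := (hx.and_mem_iff).mp (hx.1.mem_of_thm ht)
  exact ⟨fun h1 => hx.1.mp h.1 h1, fun h1 => hx.1.mp h.2 h1⟩


/-! ### Countability -/

set_option linter.unusedSectionVars false

section Enc
attribute [local instance] Fintype.toEncodable
variable {Agt : Type} [DecidableEq Agt] [Fintype Agt]

noncomputable def encF : Form Agt → ℕ
  | .atom n => Nat.pair 0 n
  | .neg φ => Nat.pair 1 (encF φ)
  | .and φ ψ => Nat.pair 2 (Nat.pair (encF φ) (encF ψ))
  | .know a φ => Nat.pair 3 (Nat.pair (Encodable.encode a) (encF φ))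
  | .ann φ ψ => Nat.pair 4 (Nat.pair (encF φ) (encF ψ))
  | .group G χ φ => Nat.pair 5 (Nat.pair (Encodable.encode G) (Nat.pair (encF χ) (encF φ)))
  | .coal G φ => Nat.pair 6 (Nat.pair (Encodable.encode G) (encF φ))

lemma encF_injective : Function.Injective (encF (Agt := Agt)) := by
  intro φ
  induction φ with
  | atom n =>
      intro ψ h; cases ψ <;> simp only [encF, Nat.pair_eq_pair, Nat.reduceEqDiff, true_and, false_and] at h
      rw [h]
  | neg a ih =>
      intro ψ h; cases ψ <;> simp only [encF, Nat.pair_eq_pair, Nat.reduceEqDiff, true_and, false_and] at h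
      rw [ih h]
  | and a b iha ihb =>
      intro ψ h; cases ψ <;> simp only [encF, Nat.pair_eq_pair, Nat.reduceEqDiff, true_and, false_and] at h
      rw [iha h.1, ihb h.2]
  | know i a ih =>
      intro ψ h; cases ψ <;> simp only [encF, Nat.pair_eq_pair, Nat.reduceEqDiff, true_and, false_and] at h
      rw [Encodable.encode_injective h.1, ih h.2]
  | ann a b iha ihb =>
      intro ψ h; cases ψ <;> simp only [encF, Nat.pair_eq_pair, Nat.reduceEqDiff, true_and, false_and] at h
      rw [iha h.1, ihb h.2]
  | group G a b iha ihb =>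
      intro ψ h; cases ψ <;> simp only [encF, Nat.pair_eq_pair, Nat.reduceEqDiff, true_and, false_and] at h
      rw [Encodable.encode_injective h.1, iha h.2.1, ihb h.2.2]
  | coal G a ih =>
      intro ψ h; cases ψ <;> simp only [encF, Nat.pair_eq_pair, Nat.reduceEqDiff, true_and, false_and] at h
      rw [Encodable.encode_injective h.1, ih h.2]

noncomputable def encN : NForm Agt → ℕ
  | .hole => Nat.pair 0 0
  | .imp φ η => Nat.pair 1 (Nat.pair (encF φ) (encN η))
  | .know a η => Nat.pair 2 (Nat.pair (Encodable.encode a) (encN η))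
  | .ann φ η => Nat.pair 3 (Nat.pair (encF φ) (encN η))

lemma encN_injective : Function.Injective (encN (Agt := Agt)) := by
  intro η
  induction η with
  | hole =>
      intro ξ h; cases ξ <;> simp only [encN, encF, Nat.pair_eq_pair, Nat.reduceEqDiff, true_and, false_and] at h
      rfl
  | imp φ η ih =>
      intro ξ h; cases ξ <;> simp only [encN, encF, Nat.pair_eq_pair, Nat.reduceEqDiff, true_and, false_and] at h
      rw [encF_injective h.1, ih h.2]
  | know a η ih =>
      intro ξ h; cases ξ <;> simp only [encN, encF, Nat.pair_eq_pair, Nat.reduceEqDiff, true_and, false_and] at h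
      rw [Encodable.encode_injective h.1, ih h.2]
  | ann φ η ih =>
      intro ξ h; cases ξ <;> simp only [encN, encF, Nat.pair_eq_pair, Nat.reduceEqDiff, true_and, false_and] at h
      rw [encF_injective h.1, ih h.2]

instance : Countable (Form Agt) := ⟨⟨encF, encF_injective⟩⟩
instance : Countable (NForm Agt) := ⟨⟨encN, encN_injective⟩⟩
instance : Nonempty (Form Agt) := ⟨.atom 0⟩
instance : Nonempty (NForm Agt) := ⟨.hole⟩
instance : Nonempty (EForm Agt) := ⟨.atom 0⟩

end Enc

lemma exists_enum (α : Type*) [Countable α] [Nonempty α] :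
    ∃ t : ℕ → α, ∀ (a : α) (m : ℕ), ∃ n, m ≤ n ∧ t n = a := by
  obtain ⟨s, hs⟩ := exists_surjective_nat α
  refine ⟨fun n => s (Nat.unpair n).1, fun a m => ?_⟩
  obtain ⟨k, hk⟩ := hs a
  exact ⟨Nat.pair k m, Nat.right_le_pair k m, by simp [Nat.unpair_pair, hk]⟩

/-! ### The theory x ⊕ φ and Lindenbaum -/

section Lind
variable {Agt : Type} [DecidableEq Agt] [Fintype Agt] {x y : Set (Form Agt)}

def oplus (x : Set (Form Agt)) (φ : Form Agt) : Set (Form Agt) := {ψ | φ.imp ψ ∈ x}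

lemma IsTheory.oplus_theory (ht : IsTheory x) (φ : Form Agt) : IsTheory (oplus x φ) where
  mem_of_thm {ψ} h := by
    have t : Thm (ψ.imp (φ.imp ψ)) := thm_taut _ (by
      intro v hn ha; simp only [Form.imp, hn, ha]; tauto)
    exact ht.mp (ht.mem_of_thm t) (ht.mem_of_thm h)
  mp {ψ χ} h1 h2 := by
    have t : Thm ((φ.imp (ψ.imp χ)).imp ((φ.imp ψ).imp (φ.imp χ))) := thm_taut _ (by
      intro v hn ha; simp only [Form.imp, hn, ha]; tauto)
    exact ht.mp (ht.mp (ht.mem_of_thm t) h1) h2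
  r5 η G χ ψ h := ht.r5 (NForm.imp φ η) G χ ψ h
  r6 η G ψ h := ht.r6 (NForm.imp φ η) G ψ h

lemma subset_oplus (ht : IsTheory x) (φ : Form Agt) : x ⊆ oplus x φ := by
  intro ψ h
  have t : Thm (ψ.imp (φ.imp ψ)) := thm_taut _ (by
    intro v hn ha; simp only [Form.imp, hn, ha]; tauto)
  exact ht.mp (ht.mem_of_thm t) h

lemma mem_oplus_self (ht : IsTheory x) (φ : Form Agt) : φ ∈ oplus x φ :=
  ht.mem_of_thm (thm_taut _ (by intro v hn ha; simp only [Form.imp, hn, ha]; tauto))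

lemma not_consistent_iff : ¬ Consistent x ↔ Form.bot ∈ x := not_not

/-- From ¬φ → ⊥ in a theory, conclude φ. -/
lemma IsTheory.of_neg_imp_bot (ht : IsTheory x) {φ : Form Agt}
    (h : (Form.neg φ).imp Form.bot ∈ x) : φ ∈ x := by
  have t : Thm (((Form.neg φ).imp Form.bot).imp φ) := thm_taut _ (by
    intro v hn ha; simp only [Form.imp, Form.bot, hn, ha]; tauto)
  exact ht.mp (ht.mem_of_thm t) h

lemma decide_ex (hy : IsTheory y ∧ Consistent y) (φ : Form Agt) :
    ∃ z : Set (Form Agt), (IsTheory z ∧ Consistent z) ∧ y ⊆ z ∧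
      (φ ∈ z ∨ Form.neg φ ∈ z) := by
  by_cases hc : Consistent (oplus y φ)
  · exact ⟨oplus y φ, ⟨hy.1.oplus_theory φ, hc⟩, subset_oplus hy.1 φ,
      Or.inl (mem_oplus_self hy.1 φ)⟩
  · refine ⟨oplus y (Form.neg φ), ⟨hy.1.oplus_theory _, ?_⟩, subset_oplus hy.1 _,
      Or.inr (mem_oplus_self hy.1 _)⟩
    intro hb
    have h1 : φ.imp Form.bot ∈ y := not_consistent_iff.mp hc
    have h2 : (Form.neg φ).imp Form.bot ∈ y := hb
    have t : Thm ((φ.imp Form.bot).imp (((Form.neg φ).imp Form.bot).imp Form.bot)) :=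
      thm_taut _ (by intro v hn ha; simp only [Form.imp, Form.bot, hn, ha]; tauto)
    exact hy.2 (hy.1.mp (hy.1.mp (hy.1.mem_of_thm t) h1) h2)

lemma witG_ex (hy : IsTheory y ∧ Consistent y) (η : NForm Agt) (G : Finset Agt)
    (χ ψ : Form Agt) :
    ∃ z : Set (Form Agt), (IsTheory z ∧ Consistent z) ∧ y ⊆ z ∧
      (Form.neg (η.subst (Form.group G χ ψ)) ∈ y →
        ∃ f : Agt → EForm Agt,
          Form.neg (η.subst (χ.and (Form.ann ((GAnn G f).and χ) ψ))) ∈ z) := by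
  by_cases htrig : Form.neg (η.subst (Form.group G χ ψ)) ∈ y
  · have hwit : ∃ f : Agt → EForm Agt,
        Consistent (oplus y (Form.neg (η.subst (χ.and (Form.ann ((GAnn G f).and χ) ψ))))) := by
      by_contra hno
      push_neg at hno
      have hall : ∀ f : Agt → EForm Agt,
          η.subst (χ.and (Form.ann ((GAnn G f).and χ) ψ)) ∈ y := by
        intro f
        exact hy.1.of_neg_imp_bot (not_consistent_iff.mp (hno f))
      have := hy.1.r5 η G χ ψ hall
      exact hy.2 (hy.1.bot_mem this htrig)
    obtain ⟨f, hf⟩ := hwit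
    exact ⟨_, ⟨hy.1.oplus_theory _, hf⟩, subset_oplus hy.1 _,
      fun _ => ⟨f, mem_oplus_self hy.1 _⟩⟩
  · exact ⟨y, hy, subset_rfl, fun h => absurd h htrig⟩

lemma witC_ex (hy : IsTheory y ∧ Consistent y) (η : NForm Agt) (G : Finset Agt)
    (ψ : Form Agt) :
    ∃ z : Set (Form Agt), (IsTheory z ∧ Consistent z) ∧ y ⊆ z ∧
      (Form.neg (η.subst (Form.coal G ψ)) ∈ y →
        ∃ f : Agt → EForm Agt,
          Form.neg (η.subst (Form.neg (Form.group Gᶜ (GAnn G f) (Form.neg ψ)))) ∈ z) := by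
  by_cases htrig : Form.neg (η.subst (Form.coal G ψ)) ∈ y
  · have hwit : ∃ f : Agt → EForm Agt,
        Consistent (oplus y (Form.neg (η.subst (Form.neg (Form.group Gᶜ (GAnn G f) (Form.neg ψ)))))) := by
      by_contra hno
      push_neg at hno
      have hall : ∀ f : Agt → EForm Agt,
          η.subst (Form.neg (Form.group Gᶜ (GAnn G f) (Form.neg ψ))) ∈ y := by
        intro f
        exact hy.1.of_neg_imp_bot (not_consistent_iff.mp (hno f))
      have := hy.1.r6 η G ψ hall
      exact hy.2 (hy.1.bot_mem this htrig)
    obtain ⟨f, hf⟩ := hwit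
    exact ⟨_, ⟨hy.1.oplus_theory _, hf⟩, subset_oplus hy.1 _,
      fun _ => ⟨f, mem_oplus_self hy.1 _⟩⟩
  · exact ⟨y, hy, subset_rfl, fun h => absurd h htrig⟩

lemma step_ex (y : Set (Form Agt)) (hy : IsTheory y ∧ Consistent y) (φ : Form Agt)
    (T : NForm Agt × Finset Agt × Form Agt × Form Agt)
    (S : NForm Agt × Finset Agt × Form Agt) :
    ∃ z : Set (Form Agt), (IsTheory z ∧ Consistent z) ∧ y ⊆ z ∧
      (φ ∈ z ∨ Form.neg φ ∈ z) ∧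
      (Form.neg (T.1.subst (Form.group T.2.1 T.2.2.1 T.2.2.2)) ∈ y →
        ∃ f : Agt → EForm Agt,
          Form.neg (T.1.subst ((T.2.2.1).and (Form.ann ((GAnn T.2.1 f).and T.2.2.1) T.2.2.2))) ∈ z) ∧
      (Form.neg (S.1.subst (Form.coal S.2.1 S.2.2)) ∈ y →
        ∃ f : Agt → EForm Agt,
          Form.neg (S.1.subst (Form.neg (Form.group S.2.1ᶜ (GAnn S.2.1 f) (Form.neg S.2.2)))) ∈ z) := by
  obtain ⟨z1, hz1, hsub1, hdec⟩ := decide_ex hy φ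
  obtain ⟨z2, hz2, hsub2, hwg⟩ := witG_ex hz1 T.1 T.2.1 T.2.2.1 T.2.2.2
  obtain ⟨z3, hz3, hsub3, hwc⟩ := witC_ex hz2 S.1 S.2.1 S.2.2
  refine ⟨z3, hz3, fun ψ h => hsub3 (hsub2 (hsub1 h)), ?_, ?_, ?_⟩
  · rcases hdec with h | h
    · exact Or.inl (hsub3 (hsub2 h))
    · exact Or.inr (hsub3 (hsub2 h))
  · intro h
    obtain ⟨f, hf⟩ := hwg (hsub1 h)
    exact ⟨f, hsub3 hf⟩
  · intro h
    exact hwc (hsub2 (hsub1 h))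

noncomputable def chain (e : ℕ → Form Agt)
    (tg : ℕ → NForm Agt × Finset Agt × Form Agt × Form Agt)
    (tc : ℕ → NForm Agt × Finset Agt × Form Agt)
    (y0 : Set (Form Agt)) (h0 : IsTheory y0 ∧ Consistent y0) :
    ℕ → {z : Set (Form Agt) // IsTheory z ∧ Consistent z}
  | 0 => ⟨y0, h0⟩
  | n + 1 =>
      ⟨(step_ex (chain e tg tc y0 h0 n).1 (chain e tg tc y0 h0 n).2 (e n) (tg n) (tc n)).choose,
       (step_ex (chain e tg tc y0 h0 n).1 (chain e tg tc y0 h0 n).2 (e n) (tg n) (tc n)).choose_spec.1⟩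

lemma chain_spec (e : ℕ → Form Agt)
    (tg : ℕ → NForm Agt × Finset Agt × Form Agt × Form Agt)
    (tc : ℕ → NForm Agt × Finset Agt × Form Agt)
    (y0 : Set (Form Agt)) (h0 : IsTheory y0 ∧ Consistent y0) (n : ℕ) :
    (chain e tg tc y0 h0 n).1 ⊆ (chain e tg tc y0 h0 (n+1)).1 ∧
    (e n ∈ (chain e tg tc y0 h0 (n+1)).1 ∨ Form.neg (e n) ∈ (chain e tg tc y0 h0 (n+1)).1) ∧
    (Form.neg ((tg n).1.subst (Form.group (tg n).2.1 (tg n).2.2.1 (tg n).2.2.2)) ∈ (chain e tg tc y0 h0 n).1 →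
      ∃ f : Agt → EForm Agt,
        Form.neg ((tg n).1.subst (((tg n).2.2.1).and (Form.ann ((GAnn (tg n).2.1 f).and (tg n).2.2.1) (tg n).2.2.2))) ∈ (chain e tg tc y0 h0 (n+1)).1) ∧
    (Form.neg ((tc n).1.subst (Form.coal (tc n).2.1 (tc n).2.2)) ∈ (chain e tg tc y0 h0 n).1 →
      ∃ f : Agt → EForm Agt,
        Form.neg ((tc n).1.subst (Form.neg (Form.group (tc n).2.1ᶜ (GAnn (tc n).2.1 f) (Form.neg (tc n).2.2)))) ∈ (chain e tg tc y0 h0 (n+1)).1) :=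
  (step_ex (chain e tg tc y0 h0 n).1 (chain e tg tc y0 h0 n).2 (e n) (tg n) (tc n)).choose_spec.2

lemma lindenbaum {y0 : Set (Form Agt)} (ht : IsTheory y0) (hc : Consistent y0) :
    ∃ z, y0 ⊆ z ∧ MCT z := by
  obtain ⟨e, he⟩ := exists_enum (Form Agt)
  obtain ⟨tg, htg⟩ := exists_enum (NForm Agt × Finset Agt × Form Agt × Form Agt)
  obtain ⟨tc, htc⟩ := exists_enum (NForm Agt × Finset Agt × Form Agt)
  let c : ℕ → {z : Set (Form Agt) // IsTheory z ∧ Consistent z} := chain e tg tc y0 ⟨ht, hc⟩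
  have mono1 : ∀ n, (c n).1 ⊆ (c (n+1)).1 := fun n => (chain_spec e tg tc y0 ⟨ht, hc⟩ n).1
  have mono : ∀ {m n : ℕ}, m ≤ n → (c m).1 ⊆ (c n).1 := by
    intro m n hmn
    induction n, hmn using Nat.le_induction with
    | base => exact subset_rfl
    | succ n hmn ih => exact ih.trans (mono1 n)
  let u : Set (Form Agt) := ⋃ n, (c n).1
  have memu : ∀ {ψ : Form Agt}, ψ ∈ u ↔ ∃ n, ψ ∈ (c n).1 := fun {ψ} => Set.mem_iUnion
  have pair : ∀ {ψ χ : Form Agt}, ψ ∈ u → χ ∈ u → ∃ n, ψ ∈ (c n).1 ∧ χ ∈ (c n).1 := by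
    intro ψ χ h1 h2
    obtain ⟨m, hm⟩ := memu.mp h1
    obtain ⟨k, hk⟩ := memu.mp h2
    exact ⟨max m k, mono (le_max_left m k) hm, mono (le_max_right m k) hk⟩
  have ucons : Consistent u := by
    intro hb
    obtain ⟨n, hn⟩ := memu.mp hb
    exact (c n).2.2 hn
  have umax : Maximal u := by
    intro ψ
    obtain ⟨n, -, hn⟩ := he ψ 0
    rcases (chain_spec e tg tc y0 ⟨ht, hc⟩ n).2.1 with h | h
    · exact Or.inl (memu.mpr ⟨n+1, hn ▸ h⟩)
    · exact Or.inr (memu.mpr ⟨n+1, hn ▸ h⟩)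
  have uthy : IsTheory u := by
    refine ⟨fun {ψ} h => memu.mpr ⟨0, (c 0).2.1.mem_of_thm h⟩, ?_, ?_, ?_⟩
    · intro ψ χ h1 h2
      obtain ⟨n, hn1, hn2⟩ := pair h1 h2
      exact memu.mpr ⟨n, (c n).2.1.mp hn1 hn2⟩
    · intro η G χ ψ h
      rcases umax (η.subst (Form.group G χ ψ)) with h1 | h1
      · exact h1
      · exfalso
        obtain ⟨m, hm⟩ := memu.mp h1
        obtain ⟨n, hmn, hn⟩ := htg (η, G, χ, ψ) m
        have wit := (chain_spec e tg tc y0 ⟨ht, hc⟩ n).2.2.1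
        rw [hn] at wit
        obtain ⟨f, hf⟩ := wit (mono hmn hm)
        obtain ⟨k, hk1, hk2⟩ := pair (h f) (memu.mpr ⟨n+1, hf⟩)
        exact (c k).2.2 ((c k).2.1.bot_mem hk1 hk2)
    · intro η G ψ h
      rcases umax (η.subst (Form.coal G ψ)) with h1 | h1
      · exact h1
      · exfalso
        obtain ⟨m, hm⟩ := memu.mp h1
        obtain ⟨n, hmn, hn⟩ := htc (η, G, ψ) m
        have wit := (chain_spec e tg tc y0 ⟨ht, hc⟩ n).2.2.2
        rw [hn] at wit
        obtain ⟨f, hf⟩ := wit (mono hmn hm)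
        obtain ⟨k, hk1, hk2⟩ := pair (h f) (memu.mpr ⟨n+1, hf⟩)
        exact (c k).2.2 ((c k).2.1.bot_mem hk1 hk2)
  exact ⟨u, fun ψ h => memu.mpr ⟨0, h⟩, uthy, ucons, umax⟩

end Lind


/-! ### Canonical model: neighbors for the K case -/

section Canon
variable {Agt : Type} [DecidableEq Agt] [Fintype Agt] {x : Set (Form Agt)}

def kset (x : Set (Form Agt)) (a : Agt) : Set (Form Agt) := {ψ | Form.know a ψ ∈ x}

lemma IsTheory.kset_theory (ht : IsTheory x) (a : Agt) : IsTheory (kset x a) where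
  mem_of_thm {ψ} h := ht.mem_of_thm (Thm.necK a h)
  mp {ψ χ} h1 h2 := ht.mp (ht.mp (ht.mem_of_thm (Thm.a1 a ψ χ)) h1) h2
  r5 η G χ ψ h := ht.r5 (NForm.know a η) G χ ψ h
  r6 η G ψ h := ht.r6 (NForm.know a η) G ψ h

lemma mem_of_know_mem (hx : MCT x) {a : Agt} {φ : Form Agt}
    (h : Form.know a φ ∈ x) : φ ∈ x := hx.1.mp (hx.1.mem_of_thm (Thm.a2 a φ)) h

lemma exists_neighbor (hx : MCT x) (a : Agt) {φ : Form Agt} (h : Form.know a φ ∉ x) :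
    ∃ y : Set (Form Agt), MCT y ∧
      {ψ : Form Agt | Form.know a ψ ∈ x} = {ψ : Form Agt | Form.know a ψ ∈ y} ∧ φ ∉ y := by
  have hk := hx.1.kset_theory a
  have hcons : Consistent (oplus (kset x a) (Form.neg φ)) := by
    intro hb
    have h1 : Form.know a ((Form.neg φ).imp Form.bot) ∈ x := hb
    have t : Thm (((Form.neg φ).imp Form.bot).imp φ) := thm_taut _ (by
      intro v hn ha; simp only [Form.imp, Form.bot, hn, ha]; tauto)
    have t2 : Thm ((Form.know a ((Form.neg φ).imp Form.bot)).imp (Form.know a φ)) :=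
      Thm.mp (Thm.a1 a _ _) (Thm.necK a t)
    exact h (hx.1.mp (hx.1.mem_of_thm t2) h1)
  obtain ⟨y, hsub, hy⟩ := lindenbaum (hk.oplus_theory _) hcons
  refine ⟨y, hy, ?_, ?_⟩
  · ext ψ; simp only [Set.mem_setOf_eq]; constructor
    · intro hkx
      have h2 : Form.know a (Form.know a ψ) ∈ x :=
        hx.1.mp (hx.1.mem_of_thm (Thm.a3 a ψ)) hkx
      have h3 : Form.know a ψ ∈ kset x a := h2
      exact hsub (subset_oplus hk _ h3)
    · intro hky
      by_contra hkx
      have h1 : Form.neg (Form.know a ψ) ∈ x := (hx.neg_mem_iff).mpr hkx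
      have h2 : Form.know a (Form.neg (Form.know a ψ)) ∈ x :=
        hx.1.mp (hx.1.mem_of_thm (Thm.a4 a ψ)) h1
      have h3 : Form.neg (Form.know a ψ) ∈ y := hsub (subset_oplus hk _ h2)
      exact hy.2.1 (hy.1.bot_mem hky h3)
  · intro hφ
    have hnφ : Form.neg φ ∈ y := hsub (mem_oplus_self hk _)
    exact hy.2.1 (hy.1.bot_mem hφ hnφ)

end Canon


/-! ### Semantic toolkit -/

section Sem
variable {Agt : Type} [DecidableEq Agt] [Fintype Agt]

lemma sat_toForm (M : Model Agt) (w : M.W) (e : EForm Agt) :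
    sat M w e.toForm ↔ esat M w e := by
  induction e generalizing w with
  | atom p => exact Iff.rfl
  | neg e ih => simp only [EForm.toForm, sat, esat]; exact not_congr (ih w)
  | and e1 e2 ih1 ih2 => simp only [EForm.toForm, sat, esat]; exact and_congr (ih1 w) (ih2 w)
  | know a e ih =>
      simp only [EForm.toForm, sat, esat]
      exact forall_congr' fun v => imp_congr Iff.rfl (ih v)

lemma sat_top (M : Model Agt) (w : M.W) : sat M w Form.top := by
  show ¬ (M.val 0 w ∧ ¬ M.val 0 w)
  tauto

lemma sat_GAnn (M : Model Agt) (w : M.W) (G : Finset Agt) (f : Agt → EForm Agt) :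
    sat M w (GAnn G f) ↔ gsat M w G f := by
  have key : ∀ l : List Agt,
      sat M w ((l.map fun i => Form.know i (f i).toForm).foldr Form.and Form.top) ↔
        ∀ i ∈ l, ∀ v, M.rel i w v → esat M v (f i) := by
    intro l
    induction l with
    | nil => simpa using sat_top M w
    | cons a l ih =>
        simp only [List.map_cons, List.foldr_cons, List.mem_cons]
        show (sat M w (Form.know a (f a).toForm) ∧ _) ↔ _
        constructor
        · rintro ⟨h1, h2⟩ i hi v hv
          rcases hi with rfl | hi
          · exact (sat_toForm M v (f i)).mp (h1 v hv)
          · exact (ih.mp h2) i hi v hv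
        · intro h
          refine ⟨fun v hv => (sat_toForm M v (f a)).mpr (h a (Or.inl rfl) v hv), ?_⟩
          exact ih.mpr fun i hi v hv => h i (Or.inr hi) v hv
  rw [GAnn, key]
  constructor
  · intro h i hi v hv; exact h i (Finset.mem_toList.mpr hi) v hv
  · intro h i hi v hv; exact h i (Finset.mem_toList.mp hi) v hv

/-- Isomorphisms of models. -/
structure MIso (M N : Model Agt) where
  toEquiv : M.W ≃ N.W
  rel_iff : ∀ a u v, M.rel a u v ↔ N.rel a (toEquiv u) (toEquiv v)
  val_iff : ∀ p w, M.val p w ↔ N.val p (toEquiv w)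

def MIso.restrict {M N : Model Agt} (i : MIso M N) (S : M.W → Prop) (S' : N.W → Prop)
    (h : ∀ v, S v ↔ S' (i.toEquiv v)) : MIso (M.restrict S) (N.restrict S') where
  toEquiv := Equiv.subtypeEquiv i.toEquiv h
  rel_iff a u v := i.rel_iff a u.1 v.1
  val_iff p w := i.val_iff p w.1

lemma MIso.restrict_apply {M N : Model Agt} (i : MIso M N) (S : M.W → Prop)
    (S' : N.W → Prop) (h : ∀ v, S v ↔ S' (i.toEquiv v)) (u : {v : M.W // S v}) :
    (i.restrict S S' h).toEquiv u = ⟨i.toEquiv u.1, (h u.1).mp u.2⟩ := by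
  rfl

lemma esat_iso {M N : Model Agt} (i : MIso M N) (e : EForm Agt) :
    ∀ w, esat M w e ↔ esat N (i.toEquiv w) e := by
  induction e with
  | atom p => exact fun w => i.val_iff p w
  | neg e ih => exact fun w => not_congr (ih w)
  | and e1 e2 ih1 ih2 => exact fun w => and_congr (ih1 w) (ih2 w)
  | know a e ih =>
      intro w
      constructor
      · intro h v hv
        have := h (i.toEquiv.symm v) (by
          rw [i.rel_iff a w (i.toEquiv.symm v), Equiv.apply_symm_apply]; exact hv)
        rw [ih] at this
        rwa [Equiv.apply_symm_apply] at this
      · intro h v hv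
        rw [ih]
        exact h (i.toEquiv v) ((i.rel_iff a w v).mp hv)

lemma gsat_iso {M N : Model Agt} (i : MIso M N) (G : Finset Agt) (f : Agt → EForm Agt)
    (w : M.W) : gsat M w G f ↔ gsat N (i.toEquiv w) G f := by
  constructor
  · intro h j hj v hv
    have := h j hj (i.toEquiv.symm v) (by
      rw [i.rel_iff j w (i.toEquiv.symm v), Equiv.apply_symm_apply]; exact hv)
    rw [esat_iso i] at this
    rwa [Equiv.apply_symm_apply] at this
  · intro h j hj v hv
    rw [esat_iso i]
    exact h j hj (i.toEquiv v) ((i.rel_iff j w v).mp hv)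

lemma sat_iso : ∀ (φ : Form Agt) (M N : Model Agt) (i : MIso M N) (w : M.W),
    sat M w φ ↔ sat N (i.toEquiv w) φ := by
  intro φ
  induction φ with
  | atom p => exact fun M N i w => i.val_iff p w
  | neg ψ ih => exact fun M N i w => not_congr (ih M N i w)
  | and ψ χ ih1 ih2 => exact fun M N i w => and_congr (ih1 M N i w) (ih2 M N i w)
  | know a ψ ih =>
      intro M N i w
      constructor
      · intro h v hv
        have := h (i.toEquiv.symm v) (by
          rw [i.rel_iff a w (i.toEquiv.symm v), Equiv.apply_symm_apply]; exact hv)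
        rw [ih M N i] at this
        rwa [Equiv.apply_symm_apply] at this
      · intro h v hv
        rw [ih M N i]
        exact h (i.toEquiv v) ((i.rel_iff a w v).mp hv)
  | ann θ ψ ih1 ih2 =>
      intro M N i w
      have hpred : ∀ v : M.W, sat M v θ ↔ sat N (i.toEquiv v) θ := fun v => ih1 M N i v
      simp only [sat]
      constructor
      · intro H h'
        have h : sat M w θ := (hpred w).mpr h'
        have hres := (ih2 _ _ (i.restrict (fun v => sat M v θ) (fun v => sat N v θ) hpred) ⟨w, h⟩).mp (H h)
        rw [MIso.restrict_apply] at hres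
        exact hres
      · intro H h
        have h' : sat N (i.toEquiv w) θ := (hpred w).mp h
        refine (ih2 _ _ (i.restrict (fun v => sat M v θ) (fun v => sat N v θ) hpred) ⟨w, h⟩).mpr ?_
        rw [MIso.restrict_apply]
        exact H h' 
  | group G χ ψ ih1 ih2 =>
      intro M N i w
      have hχ : ∀ v : M.W, sat M v χ ↔ sat N (i.toEquiv v) χ := fun v => ih1 M N i v
      simp only [sat]
      constructor
      · rintro ⟨h1, h2⟩
        refine ⟨(hχ w).mp h1, fun f h' => ?_⟩
        have hh : gsat M w G f ∧ sat M w χ := ⟨(gsat_iso i G f w).mpr h'.1, h1⟩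
        have hres := (ih2 _ _ (i.restrict (fun v => gsat M v G f ∧ sat M v χ) (fun v => gsat N v G f ∧ sat N v χ) (fun v => and_congr (gsat_iso i G f v) (hχ v))) ⟨w, hh⟩).mp (h2 f hh)
        rw [MIso.restrict_apply] at hres
        exact hres
      · rintro ⟨h1, h2⟩
        refine ⟨(hχ w).mpr h1, fun f h => ?_⟩
        have h' : gsat N (i.toEquiv w) G f ∧ sat N (i.toEquiv w) χ :=
          ⟨(gsat_iso i G f w).mp h.1, (hχ w).mp h.2⟩
        refine (ih2 _ _ (i.restrict (fun v => gsat M v G f ∧ sat M v χ) (fun v => gsat N v G f ∧ sat N v χ) (fun v => and_congr (gsat_iso i G f v) (hχ v))) ⟨w, h⟩).mpr ?_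
        rw [MIso.restrict_apply]
        exact h2 f h' 
  | coal G ψ ih =>
      intro M N i w
      simp only [sat]
      constructor
      · intro H f
        obtain ⟨g, hg⟩ := H f
        refine ⟨g, fun hf' => ?_⟩
        obtain ⟨h, hs⟩ := hg ((gsat_iso i G f w).mpr hf')
        have hres := (ih _ _ (i.restrict (fun v => gsat M v G f ∧ gsat M v Gᶜ g) (fun v => gsat N v G f ∧ gsat N v Gᶜ g) (fun v => and_congr (gsat_iso i G f v) (gsat_iso i Gᶜ g v))) ⟨w, h⟩).mp hs
        rw [MIso.restrict_apply] at hres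
        exact ⟨⟨(gsat_iso i G f w).mp h.1, (gsat_iso i Gᶜ g w).mp h.2⟩, hres⟩
      · intro H f
        obtain ⟨g, hg⟩ := H f
        refine ⟨g, fun hf => ?_⟩
        obtain ⟨h', hs⟩ := hg ((gsat_iso i G f w).mp hf)
        have h : gsat M w G f ∧ gsat M w Gᶜ g :=
          ⟨(gsat_iso i G f w).mpr h'.1, (gsat_iso i Gᶜ g w).mpr h'.2⟩
        refine ⟨h, (ih _ _ (i.restrict (fun v => gsat M v G f ∧ gsat M v Gᶜ g) (fun v => gsat N v G f ∧ gsat N v Gᶜ g) (fun v => and_congr (gsat_iso i G f v) (gsat_iso i Gᶜ g v))) ⟨w, h⟩).mpr ?_⟩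
        rw [MIso.restrict_apply]
        exact hs

end Sem


/-! ### Derived semantic equivalences -/

section Sem2
variable {Agt : Type} [DecidableEq Agt] [Fintype Agt]

instance : Nonempty (Agt → EForm Agt) := ⟨fun _ => .atom 0⟩

lemma sat_restrict_congr (M : Model Agt) {S S' : M.W → Prop} (h : ∀ v, S v ↔ S' v)
    {w : M.W} (hw : S w) (hw' : S' w) (φ : Form Agt) :
    sat (M.restrict S) ⟨w, hw⟩ φ ↔ sat (M.restrict S') ⟨w, hw'⟩ φ := by
  let i : MIso (M.restrict S) (M.restrict S') :=
    { toEquiv := Equiv.subtypeEquivRight h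
      rel_iff := fun a u v => Iff.rfl
      val_iff := fun p w => Iff.rfl }
  have hx := sat_iso φ _ _ i ⟨w, hw⟩
  have : i.toEquiv ⟨w, hw⟩ = ⟨w, hw'⟩ := Subtype.ext rfl
  rwa [this] at hx

noncomputable def restrictIso2 (M : Model Agt) (S : M.W → Prop) (T : {v : M.W // S v} → Prop) :
    MIso ((M.restrict S).restrict T) (M.restrict (fun v => ∃ h : S v, T ⟨v, h⟩)) where
  toEquiv := {
    toFun := fun u => ⟨u.1.1, u.1.2, u.2⟩
    invFun := fun u => ⟨⟨u.1, u.2.choose⟩, u.2.choose_spec⟩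
    left_inv := fun u => Subtype.ext (Subtype.ext rfl)
    right_inv := fun u => Subtype.ext rfl }
  rel_iff a u v := Iff.rfl
  val_iff p w := Iff.rfl

lemma sat_group_iff (M : Model Agt) (w : M.W) (G : Finset Agt) (χ ψ : Form Agt) :
    sat M w (.group G χ ψ) ↔
      (sat M w χ ∧ ∀ f : Agt → EForm Agt, sat M w (.ann ((GAnn G f).and χ) ψ)) := by
  simp only [sat]
  refine and_congr Iff.rfl (forall_congr' fun f => ?_)
  have hpred : ∀ v : M.W, (gsat M v G f ∧ sat M v χ) ↔ sat M v ((GAnn G f).and χ) :=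
    fun v => and_congr (sat_GAnn M v G f).symm Iff.rfl
  constructor
  · intro h hs
    have hh : gsat M w G f ∧ sat M w χ := (hpred w).mpr hs
    exact (sat_restrict_congr M hpred hh hs ψ).mp (h hh)
  · intro h hh
    have hs : sat M w ((GAnn G f).and χ) := (hpred w).mp hh
    exact (sat_restrict_congr M hpred hh hs ψ).mpr (h hs)

lemma sat_coal_iff (M : Model Agt) (w : M.W) (G : Finset Agt) (ψ : Form Agt) :
    sat M w (.coal G ψ) ↔
      ∀ f : Agt → EForm Agt, sat M w (.neg (.group Gᶜ (GAnn G f) (.neg ψ))) := by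
  simp only [sat]
  constructor
  · intro H f
    intro hgr
    obtain ⟨hgann, hall⟩ := hgr
    have hf : gsat M w G f := (sat_GAnn M w G f).mp hgann
    obtain ⟨g, hg⟩ := H f
    obtain ⟨h, hs⟩ := hg hf
    have hpred : ∀ v : M.W,
        (gsat M v G f ∧ gsat M v Gᶜ g) ↔ (gsat M v Gᶜ g ∧ sat M v (GAnn G f)) := by
      intro v
      rw [sat_GAnn]
      exact and_comm
    have hh' : gsat M w Gᶜ g ∧ sat M w (GAnn G f) := ⟨h.2, hgann⟩
    have := hall g hh'
    exact this ((sat_restrict_congr M hpred h hh' ψ).mp hs)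
  · intro H f
    by_cases hf : gsat M w G f
    · have h1 := H f
      have hgann : sat M w (GAnn G f) := (sat_GAnn M w G f).mpr hf
      have h2 : ¬ ∀ g : Agt → EForm Agt,
          ∀ h : gsat M w Gᶜ g ∧ sat M w (GAnn G f),
            sat (M.restrict fun v => gsat M v Gᶜ g ∧ sat M v (GAnn G f)) ⟨w, h⟩ (Form.neg ψ) := by
        intro hforall
        exact h1 ⟨hgann, hforall⟩
      push_neg at h2
      obtain ⟨g, hg⟩ := h2
      obtain ⟨hh', hns⟩ := hg
      refine ⟨g, fun _ => ?_⟩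
      have hpred : ∀ v : M.W,
          (gsat M v G f ∧ gsat M v Gᶜ g) ↔ (gsat M v Gᶜ g ∧ sat M v (GAnn G f)) := by
        intro v
        rw [sat_GAnn]
        exact and_comm
      have hh : gsat M w G f ∧ gsat M w Gᶜ g := ⟨hf, hh'.1⟩
      refine ⟨hh, ?_⟩
      have hns' : ¬ ¬ sat (M.restrict fun v => gsat M v Gᶜ g ∧ sat M v (GAnn G f)) ⟨w, hh'⟩ ψ :=
        fun hcon => hns (fun hs => hcon hs)
      have hs := Classical.not_not.mp hns'
      exact (sat_restrict_congr M hpred hh hh' ψ).mpr hs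
    · exact ⟨Classical.arbitrary _, fun hg => absurd hg hf⟩

lemma sat_and (M : Model Agt) (w : M.W) (φ ψ : Form Agt) :
    sat M w (.and φ ψ) ↔ (sat M w φ ∧ sat M w ψ) := Iff.rfl

lemma sat_ann_group (M : Model Agt) (w : M.W) (φ : Form Agt) (G : Finset Agt)
    (χ θ : Form Agt) :
    sat M w (.ann φ (.group G χ θ)) ↔
      ∀ f : Agt → EForm Agt, sat M w (.ann φ (χ.and (.ann ((GAnn G f).and χ) θ))) := by
  constructor
  · intro H f h
    have hg := (sat_group_iff _ _ G χ θ).mp (H h)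
    exact ⟨hg.1, hg.2 f⟩
  · intro H h
    refine (sat_group_iff _ _ G χ θ).mpr ?_
    exact ⟨((sat_and _ _ _ _).mp (H (Classical.arbitrary _) h)).1,
      fun f => ((sat_and _ _ _ _).mp (H f h)).2⟩

lemma sat_ann_coal (M : Model Agt) (w : M.W) (φ : Form Agt) (G : Finset Agt) (θ : Form Agt) :
    sat M w (.ann φ (.coal G θ)) ↔
      ∀ f : Agt → EForm Agt,
        sat M w (.ann φ (.neg (.group Gᶜ (GAnn G f) (.neg θ)))) := by
  constructor
  · intro H f h
    exact (sat_coal_iff _ _ G θ).mp (H h) f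
  · intro H h
    exact (sat_coal_iff _ _ G θ).mpr fun f => H f h

lemma sat_ann_ann (M : Model Agt) (w : M.W) (φ ψ χ : Form Agt) :
    sat M w (.ann φ (.ann ψ χ)) ↔ sat M w (.ann (φ.and (.ann φ ψ)) χ) := by
  have hpred : ∀ v : M.W,
      (∃ h : sat M v φ, sat (M.restrict fun u => sat M u φ) ⟨v, h⟩ ψ) ↔
        sat M v (φ.and (.ann φ ψ)) := by
    intro v
    constructor
    · rintro ⟨h, hq⟩
      exact ⟨h, fun _ => hq⟩
    · rintro ⟨h, hq⟩
      exact ⟨h, hq h⟩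
  simp only [sat]
  constructor
  · intro H h'
    have hand : sat M w φ ∧ sat M w (.ann φ ψ) := h'
    obtain ⟨h, hq⟩ := hand
    have h2 : sat (M.restrict fun u => sat M u φ) ⟨w, h⟩ ψ := hq h
    have hres := H h h2
    have hiso := (sat_iso χ _ _
      (restrictIso2 M (fun u => sat M u φ) (fun u => sat (M.restrict fun u => sat M u φ) u ψ))
      ⟨⟨w, h⟩, h2⟩).mp hres
    have hpt : (restrictIso2 M (fun u => sat M u φ)
        (fun u => sat (M.restrict fun u => sat M u φ) u ψ)).toEquiv ⟨⟨w, h⟩, h2⟩ =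
        ⟨w, ⟨h, h2⟩⟩ := rfl
    rw [hpt] at hiso
    exact (sat_restrict_congr M hpred ⟨h, h2⟩ h' χ).mp hiso
  · intro H h h2
    have h' : sat M w (φ.and (.ann φ ψ)) := (hpred w).mp ⟨h, h2⟩
    have hres := H h'
    have hback := (sat_restrict_congr M hpred ⟨h, h2⟩ h' χ).mpr hres
    have hpt : (restrictIso2 M (fun u => sat M u φ)
        (fun u => sat (M.restrict fun u => sat M u φ) u ψ)).toEquiv ⟨⟨w, h⟩, h2⟩ =
        ⟨w, ⟨h, h2⟩⟩ := rfl
    exact (sat_iso χ _ _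
      (restrictIso2 M (fun u => sat M u φ) (fun u => sat (M.restrict fun u => sat M u φ) u ψ))
      ⟨⟨w, h⟩, h2⟩).mpr (hpt ▸ hback)

end Sem2


/-! ### Derived syntactic rules -/

section Syn
variable {Agt : Type} [DecidableEq Agt] [Fintype Agt]

lemma thm_imp_of_iff {X Y Z : Form Agt} (h1 : Thm (X.iff' Y)) (h2 : Thm (Z.imp Y)) :
    Thm (Z.imp X) := by
  have t : Thm ((X.iff' Y).imp ((Z.imp Y).imp (Z.imp X))) := thm_taut _ (by
    intro v hn ha; simp only [Form.imp, Form.iff', hn, ha]; tauto)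
  exact Thm.mp (Thm.mp t h1) h2

lemma thm_imp_and {Z A B : Form Agt} (h1 : Thm (Z.imp A)) (h2 : Thm (Z.imp B)) :
    Thm (Z.imp (A.and B)) := by
  have t : Thm ((Z.imp A).imp ((Z.imp B).imp (Z.imp (A.and B)))) := thm_taut _ (by
    intro v hn ha; simp only [Form.imp, hn, ha]; tauto)
  exact Thm.mp (Thm.mp t h1) h2

lemma thm_imp_trans {A B C : Form Agt} (h1 : Thm (A.imp B)) (h2 : Thm (B.imp C)) :
    Thm (A.imp C) := by
  have t : Thm ((A.imp B).imp ((B.imp C).imp (A.imp C))) := thm_taut _ (by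
    intro v hn ha; simp only [Form.imp, hn, ha]; tauto)
  exact Thm.mp (Thm.mp t h1) h2

/-- ¬φ → [φ]B is derivable for every B, φ. -/
lemma thm_negAnn : ∀ (B φ : Form Agt), Thm ((Form.neg φ).imp (.ann φ B)) := by
  intro B
  induction B with
  | atom p =>
      intro φ
      refine thm_imp_of_iff (Thm.a5 φ p) (thm_taut _ ?_)
      intro v hn ha; simp only [Form.imp, hn, ha]; tauto
  | neg ψ ih =>
      intro φ
      refine thm_imp_of_iff (Thm.a6 φ ψ) (thm_taut _ ?_)
      intro v hn ha; simp only [Form.imp, hn, ha]; tauto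
  | and ψ χ ih1 ih2 =>
      intro φ
      exact thm_imp_of_iff (Thm.a7 φ ψ χ) (thm_imp_and (ih1 φ) (ih2 φ))
  | know a ψ ih =>
      intro φ
      refine thm_imp_of_iff (Thm.a8 φ a ψ) (thm_taut _ ?_)
      intro v hn ha; simp only [Form.imp, hn, ha]; tauto
  | ann ψ χ ih1 ih2 =>
      intro φ
      refine thm_imp_of_iff (Thm.a9 φ ψ χ) ?_
      refine thm_imp_trans (thm_taut _ ?_) (ih2 (φ.and (.ann φ ψ)))
      intro v hn ha; simp only [Form.imp, hn, ha]; tauto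
  | group G χ θ ih1 ih2 =>
      intro φ
      have hprem : ∀ f : Agt → EForm Agt,
          Thm ((NForm.imp (Form.neg φ) (NForm.ann φ NForm.hole)).subst
            (χ.and (Form.ann ((GAnn G f).and χ) θ))) := by
        intro f
        show Thm ((Form.neg φ).imp (.ann φ (χ.and (Form.ann ((GAnn G f).and χ) θ))))
        refine thm_imp_of_iff (Thm.a7 φ χ (Form.ann ((GAnn G f).and χ) θ)) ?_
        refine thm_imp_and (ih1 φ) ?_
        refine thm_imp_of_iff (Thm.a9 φ ((GAnn G f).and χ) θ) ?_
        refine thm_imp_trans (thm_taut _ ?_) (ih2 (φ.and (.ann φ ((GAnn G f).and χ))))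
        intro v hn ha; simp only [Form.imp, hn, ha]; tauto
      exact Thm.r5 (η := NForm.imp (Form.neg φ) (NForm.ann φ NForm.hole)) hprem
  | coal G θ ih =>
      intro φ
      have hprem : ∀ f : Agt → EForm Agt,
          Thm ((NForm.imp (Form.neg φ) (NForm.ann φ NForm.hole)).subst
            (.neg (Form.group Gᶜ (GAnn G f) (.neg θ)))) := by
        intro f
        show Thm ((Form.neg φ).imp (.ann φ (.neg (Form.group Gᶜ (GAnn G f) (.neg θ)))))
        refine thm_imp_of_iff (Thm.a6 φ (Form.group Gᶜ (GAnn G f) (.neg θ))) (thm_taut _ ?_)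
        intro v hn ha; simp only [Form.imp, hn, ha]; tauto
      exact Thm.r6 (η := NForm.imp (Form.neg φ) (NForm.ann φ NForm.hole)) hprem

/-- Monotonicity of [φ]: from ⊢ A → B infer ⊢ [φ]A → [φ]B. -/
lemma thm_ann_mono (φ : Form Agt) {A B : Form Agt} (h : Thm (A.imp B)) :
    Thm ((Form.ann φ A).imp (Form.ann φ B)) := by
  have hnec : Thm (Form.ann φ (A.imp B)) := Thm.necAnn φ h
  have T1 : Thm (φ.imp (.neg (Form.ann φ (A.and (.neg B))))) :=
    Thm.mp (by
      have t : Thm (((Form.ann φ (.neg (A.and (.neg B)))).iff'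
          (φ.imp (.neg (Form.ann φ (A.and (.neg B)))))).imp
          ((Form.ann φ (.neg (A.and (.neg B)))).imp
            (φ.imp (.neg (Form.ann φ (A.and (.neg B))))))) := thm_taut _ (by
        intro v hn ha; simp only [Form.imp, Form.iff', hn, ha]; tauto)
      exact Thm.mp t (Thm.a6 φ (A.and (.neg B)))) hnec
  have T2 := Thm.a7 φ A (.neg B)
  have T3 := Thm.a6 φ B
  have T4 := thm_negAnn B φ
  have t : Thm ((φ.imp (.neg (Form.ann φ (A.and (.neg B))))).imp
      (((Form.ann φ (A.and (.neg B))).iff' ((Form.ann φ A).and (Form.ann φ (.neg B)))).imp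
        (((Form.ann φ (.neg B)).iff' (φ.imp (.neg (Form.ann φ B)))).imp
          (((Form.neg φ).imp (Form.ann φ B)).imp
            ((Form.ann φ A).imp (Form.ann φ B)))))) := thm_taut _ (by
    intro v hn ha; simp only [Form.imp, Form.iff', hn, ha]; tauto)
  exact Thm.mp (Thm.mp (Thm.mp (Thm.mp t T1) T2) T3) T4

end Syn


/-! ### Termination measure -/

section Meas
variable {Agt : Type} [DecidableEq Agt] [Fintype Agt]

/-- PAL-style weight. -/
def wght : Form Agt → ℕ
  | .atom _ => 1
  | .neg φ => wght φ + 1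
  | .and φ ψ => wght φ + wght ψ + 1
  | .know _ φ => wght φ + 1
  | .ann φ ψ => (wght φ + 4) * wght ψ
  | .group _ χ φ => wght χ + wght φ + 1
  | .coal _ φ => wght φ + 1

lemma wght_pos (φ : Form Agt) : 0 < wght φ := by
  induction φ with
  | atom p => simp [wght]
  | neg φ ih => simp [wght]
  | and φ ψ ih1 ih2 => simp [wght]
  | know a φ ih => simp [wght]
  | ann φ ψ ih1 ih2 => exact Nat.mul_pos (by omega) ih2
  | group G χ φ ih1 ih2 => simp [wght]
  | coal G φ ih => simp [wght]

def measRel (a b : Form Agt) : Prop :=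
  Prod.Lex (· < ·) (Prod.Lex (· < ·) (· < ·))
    (dC a, dG a, wght a) (dC b, dG b, wght b)

lemma measRel_wf : WellFounded (measRel (Agt := Agt)) := by
  have h2 : WellFounded (Prod.Lex (α := ℕ) (β := ℕ) (· < ·) (· < ·)) :=
    (Nat.lt_wfRel.wf).prod_lex (Nat.lt_wfRel.wf)
  have h1 : WellFounded (Prod.Lex (α := ℕ) (β := ℕ × ℕ) (· < ·)
      (Prod.Lex (· < ·) (· < ·))) := (Nat.lt_wfRel.wf).prod_lex h2
  exact InvImage.wf _ h1

lemma measRel_intro {a b : Form Agt}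
    (h : dC a < dC b ∨ (dC a = dC b ∧ (dG a < dG b ∨ (dG a = dG b ∧ wght a < wght b)))) :
    measRel a b := by
  show Prod.Lex _ _ (dC a, dG a, wght a) (dC b, dG b, wght b)
  rcases h with h | ⟨h1, h | ⟨h2, h⟩⟩
  · exact Prod.Lex.left _ _ h
  · rw [h1]; exact Prod.Lex.right _ (Prod.Lex.left _ _ h)
  · rw [h1, h2]; exact Prod.Lex.right _ (Prod.Lex.right _ h)

lemma measRel_of_le {a b : Form Agt} (h1 : dC a ≤ dC b) (h2 : dG a ≤ dG b)
    (h3 : wght a < wght b) : measRel a b := by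
  rcases lt_or_eq_of_le h1 with h | h
  · exact measRel_intro (Or.inl h)
  · rcases lt_or_eq_of_le h2 with h' | h'
    · exact measRel_intro (Or.inr ⟨h, Or.inl h'⟩)
    · exact measRel_intro (Or.inr ⟨h, Or.inr ⟨h', h3⟩⟩)

lemma measRel_of_dG {a b : Form Agt} (h1 : dC a ≤ dC b) (h2 : dG a < dG b) : measRel a b := by
  rcases lt_or_eq_of_le h1 with h | h
  · exact measRel_intro (Or.inl h)
  · exact measRel_intro (Or.inr ⟨h, Or.inl h2⟩)

lemma measRel_of_dC {a b : Form Agt} (h1 : dC a < dC b) : measRel a b :=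
  measRel_intro (Or.inl h1)

lemma dC_toForm (e : EForm Agt) : dC e.toForm = 0 := by
  induction e <;> simp [EForm.toForm, dC, *]

lemma dG_toForm (e : EForm Agt) : dG e.toForm = 0 := by
  induction e <;> simp [EForm.toForm, dG, *]

lemma wght_toForm_pos (e : EForm Agt) : 0 < wght (EForm.toForm (Agt := Agt) e) :=
  wght_pos _

lemma dC_GAnn (G : Finset Agt) (f : Agt → EForm Agt) : dC (GAnn G f) = 0 := by
  rw [GAnn]
  induction G.toList with
  | nil => simp [Form.top, Form.bot, dC]
  | cons a l ih => simp [dC, ih, dC_toForm]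

lemma dG_GAnn (G : Finset Agt) (f : Agt → EForm Agt) : dG (GAnn G f) = 0 := by
  rw [GAnn]
  induction G.toList with
  | nil => simp [Form.top, Form.bot, dG]
  | cons a l ih => simp [dG, ih, dG_toForm]

end Meas


theorem truthLemma (φ₀ : Form Agt) (x₀ : {y : Set (Form Agt) // MCT y}) :
    φ₀ ∈ x₀.1 ↔ sat (canonicalModel Agt) x₀ φ₀ := by
  revert x₀
  refine (measRel_wf (Agt := Agt)).induction
    (C := fun φ => ∀ x : {y : Set (Form Agt) // MCT y},
      φ ∈ x.1 ↔ sat (canonicalModel Agt) x φ) φ₀ ?_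
  intro φ IH x
  cases φ with
  | atom p => exact Iff.rfl
  | neg ψ =>
      have ih := IH ψ (measRel_of_le (le_refl _) (le_refl _)
        (by simp only [wght]; omega)) x
      exact x.2.neg_mem_iff.trans (not_congr ih)
  | and ψ χ =>
      have ih1 := IH ψ (measRel_of_le (by simp only [dC]; omega)
        (by simp only [dG]; omega) (by simp only [wght]; omega)) x
      have ih2 := IH χ (measRel_of_le (by simp only [dC]; omega)
        (by simp only [dG]; omega) (by simp only [wght]; omega)) x
      exact x.2.and_mem_iff.trans (and_congr ih1 ih2)
  | know a ψ =>
      have ih := fun (v : {y : Set (Form Agt) // MCT y}) =>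
        IH ψ (measRel_of_le (le_refl _) (le_refl _) (by simp only [wght]; omega)) v
      constructor
      · intro h v hrel
        have hset : {χ : Form Agt | Form.know a χ ∈ x.1} =
            {χ : Form Agt | Form.know a χ ∈ v.1} := hrel
        have h2 : ψ ∈ {χ : Form Agt | Form.know a χ ∈ x.1} := h
        rw [hset] at h2
        exact (ih v).mp (mem_of_know_mem v.2 h2)
      · intro h
        by_contra hk
        obtain ⟨y, hy, heq, hnot⟩ := exists_neighbor x.2 a hk
        exact hnot ((ih ⟨y, hy⟩).mpr (h ⟨y, hy⟩ heq))
  | ann φ' ψ =>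
      have mφ : measRel φ' (.ann φ' ψ) := by
        refine measRel_of_le (by simp only [dC]; omega) (by simp only [dG]; omega) ?_
        have := wght_pos ψ
        simp only [wght]
        nlinarith
      cases ψ with
      | atom p =>
          have ihφ := IH φ' mφ x
          rw [x.2.iff_mem (Thm.a5 φ' p), x.2.imp_mem_iff]
          constructor
          · intro H h
            exact H (ihφ.mpr h)
          · intro H hm
            exact H (ihφ.mp hm)
      | neg θ =>
          have ihφ := IH φ' mφ x
          have iha := IH (.ann φ' θ) (by
            refine measRel_of_le (by simp only [dC]; omega) (by simp only [dG]; omega) ?_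
            have := wght_pos θ
            simp only [wght]
            nlinarith) x
          rw [x.2.iff_mem (Thm.a6 φ' θ), x.2.imp_mem_iff, x.2.neg_mem_iff, iha, ihφ]
          constructor
          · intro H h hs
            exact H h fun _ => hs
          · intro H h hall
            exact H h (hall h)
      | and θ1 θ2 =>
          have ih1 := IH (.ann φ' θ1) (by
            refine measRel_of_le (by simp only [dC]; omega) (by simp only [dG]; omega) ?_
            have := wght_pos θ2
            simp only [wght]
            nlinarith) x
          have ih2 := IH (.ann φ' θ2) (by
            refine measRel_of_le (by simp only [dC]; omega) (by simp only [dG]; omega) ?_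
            have := wght_pos θ1
            simp only [wght]
            nlinarith) x
          rw [x.2.iff_mem (Thm.a7 φ' θ1 θ2), x.2.and_mem_iff, ih1, ih2]
          constructor
          · intro H h
            exact ⟨H.1 h, H.2 h⟩
          · intro H
            exact ⟨fun h => ((sat_and _ _ _ _).mp (H h)).1,
              fun h => ((sat_and _ _ _ _).mp (H h)).2⟩
      | know a θ =>
          have ihφ := IH φ' mφ x
          have ihk := IH (.know a (.ann φ' θ)) (by
            refine measRel_of_le (by simp only [dC]; omega) (by simp only [dG]; omega) ?_
            have := wght_pos θ
            have := wght_pos φ'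
            simp only [wght]
            nlinarith) x
          rw [x.2.iff_mem (Thm.a8 φ' a θ), x.2.imp_mem_iff, ihk, ihφ]
          constructor
          · intro H h v' hrel
            exact H h v'.1 hrel v'.2
          · intro H h v hrel hv
            exact H h ⟨v, hv⟩ hrel
      | ann θ1 θ2 =>
          have iha := IH (.ann (φ'.and (.ann φ' θ1)) θ2) (by
            refine measRel_of_le (by simp only [dC]; omega) (by simp only [dG]; omega) ?_
            have h1 := wght_pos θ1
            have h2 := wght_pos θ2
            have h3 := wght_pos φ'
            simp only [wght]
            nlinarith) x
          rw [x.2.iff_mem (Thm.a9 φ' θ1 θ2), iha]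
          exact (sat_ann_ann _ _ φ' θ1 θ2).symm
      | group G' χ θ =>
          have meas : ∀ f : Agt → EForm Agt,
              measRel (.ann φ' (χ.and (.ann ((GAnn G' f).and χ) θ))) (.ann φ' (.group G' χ θ)) := by
            intro f
            refine measRel_of_dG ?_ ?_
            · simp only [dC, dC_GAnn]; omega
            · simp only [dG, dG_GAnn]; omega
          constructor
          · intro h
            refine (sat_ann_group _ _ φ' G' χ θ).mpr fun f => ?_
            have hthm := thm_ann_mono φ' (Thm.a10 G' χ θ f)
            exact (IH _ (meas f) x).mp (x.2.1.mp (x.2.1.mem_of_thm hthm) h)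
          · intro h
            exact x.2.1.r5 (NForm.ann φ' NForm.hole) G' χ θ (fun f =>
              (IH _ (meas f) x).mpr ((sat_ann_group _ _ φ' G' χ θ).mp h f))
      | coal G' θ =>
          have meas : ∀ f : Agt → EForm Agt,
              measRel (.ann φ' (.neg (.group G'ᶜ (GAnn G' f) (.neg θ)))) (.ann φ' (.coal G' θ)) := by
            intro f
            refine measRel_of_dC ?_
            simp only [dC, dC_GAnn]; omega
          constructor
          · intro h
            refine (sat_ann_coal _ _ φ' G' θ).mpr fun f => ?_
            have hthm := thm_ann_mono φ' (Thm.a11 G' θ f)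
            exact (IH _ (meas f) x).mp (x.2.1.mp (x.2.1.mem_of_thm hthm) h)
          · intro h
            exact x.2.1.r6 (NForm.ann φ' NForm.hole) G' θ (fun f =>
              (IH _ (meas f) x).mpr ((sat_ann_coal _ _ φ' G' θ).mp h f))
  | group G χ θ =>
      have measχ : measRel χ (.group G χ θ) := by
        refine measRel_of_le (by simp only [dC]; omega) (by simp only [dG]; omega)
          (by simp only [wght]; omega)
      have meas : ∀ f : Agt → EForm Agt,
          measRel (.ann ((GAnn G f).and χ) θ) (.group G χ θ) := by
        intro f
        refine measRel_of_dG ?_ ?_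
        · simp only [dC, dC_GAnn]; omega
        · simp only [dG, dG_GAnn]; omega
      constructor
      · intro h
        refine (sat_group_iff _ _ G χ θ).mpr ⟨?_, fun f => ?_⟩
        · have hand := x.2.and_mem_iff.mp
            (x.2.1.mp (x.2.1.mem_of_thm (Thm.a10 G χ θ (Classical.arbitrary _))) h)
          exact (IH χ measχ x).mp hand.1
        · have hand := x.2.and_mem_iff.mp
            (x.2.1.mp (x.2.1.mem_of_thm (Thm.a10 G χ θ f)) h)
          exact (IH _ (meas f) x).mp hand.2
      · intro h
        have hs := (sat_group_iff _ _ G χ θ).mp h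
        exact x.2.1.r5 NForm.hole G χ θ (fun f =>
          x.2.and_mem_iff.mpr ⟨(IH χ measχ x).mpr hs.1, (IH _ (meas f) x).mpr (hs.2 f)⟩)
  | coal G θ =>
      have meas : ∀ f : Agt → EForm Agt,
          measRel (.neg (.group Gᶜ (GAnn G f) (.neg θ))) (.coal G θ) := by
        intro f
        refine measRel_of_dC ?_
        simp only [dC, dC_GAnn]; omega
      constructor
      · intro h
        refine (sat_coal_iff _ _ G θ).mpr fun f => ?_
        exact (IH _ (meas f) x).mp (x.2.1.mp (x.2.1.mem_of_thm (Thm.a11 G θ f)) h)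
      · intro h
        exact x.2.1.r6 NForm.hole G θ (fun f =>
          (IH _ (meas f) x).mpr ((sat_coal_iff _ _ G θ).mp h f))

end Block

end CoRGAL

open CoRGAL

/-- Truth Lemma: for every formula φ and every maximal consistent theory x,
φ ∈ x iff (M^C, x) ⊨ φ in the canonical model. -/
theorem statement18 (Agt : Type) [DecidableEq Agt] [Fintype Agt]
    (φ : Form Agt) (x : {y : Set (Form Agt) // MCT y}) :
    φ ∈ x.1 ↔ sat (canonicalModel Agt) x φ :=
  truthLemma φ x
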